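/- Let ω ∈ C_c^∞(U) and define the stream function ψ(x) = ∫_U G(x,y) ω(y) dy, where G(x,y) = (1/2π) log( |T(x) − T(y)| / ( |T(x) − T(y)*| · |T(y)| ) ) is the Green's function of U. Then ψ is bounded on U: there is a constant C > 0, which may be chosen to depend only on T, on ‖ω‖_{L¹}, ‖ω‖_{L^∞}, and on the diameter and location of the support of ω, such that sup_{x ∈ U} |ψ(x)| ≤ C. -/

import Mathlib

open MeasureTheory Set Filter

noncomputable section

/-- Inversion with respect to the unit circle: `y* = y / |y|²`. -/
def starInv (y : ℂ) : ℂ := (‖y‖ ^ 2)⁻¹ • y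

/-- The Green's function of the exterior domain `U`, written via the conformal map `T`. -/
def green (T : ℂ → ℂ) (x y : ℂ) : ℝ :=
  (2 * Real.pi)⁻¹ * Real.log (‖T x - T y‖ /
    (‖T x - starInv (T y)‖ * ‖T y‖))

lemma log_le_two_sqrt {x : ℝ} (hx : 0 < x) : Real.log x ≤ 2 * Real.sqrt x := by
  have h1 : Real.log x = 2 * Real.log (Real.sqrt x) := by rw [Real.log_sqrt hx.le]; ring
  have h2 : Real.log (Real.sqrt x) ≤ Real.sqrt x - 1 :=
    Real.log_le_sub_one_of_pos (Real.sqrt_pos.2 hx)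
  nlinarith [Real.sqrt_nonneg x]

lemma key_identity (a b : ℂ) (hb : b ≠ 0) :
    (‖a - starInv b‖ * ‖b‖)^2
      = ‖a - b‖^2 + (‖a‖^2 - 1)*(‖b‖^2 - 1) := by
  have hnb : Complex.normSq b ≠ 0 := (Complex.normSq_pos.2 hb).ne'
  have hsq : ‖b‖ ^ 2 = Complex.normSq b := Complex.sq_norm b
  rw [mul_pow, Complex.sq_norm, Complex.sq_norm, Complex.sq_norm, Complex.sq_norm]
  unfold starInv
  rw [hsq]
  rw [Complex.real_smul]
  simp only [Complex.normSq_apply, Complex.sub_re, Complex.sub_im, Complex.mul_re,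
    Complex.mul_im, Complex.ofReal_re, Complex.ofReal_im]
  have hnb' : b.re * b.re + b.im * b.im ≠ 0 := by
    simpa [Complex.normSq_apply] using hnb
  have hnb2 : b.re ^ 2 + b.im ^ 2 ≠ 0 := by rw [pow_two, pow_two]; exact hnb'
  field_simp
  ring
lemma green_bound (T : ℂ → ℂ) (x y : ℂ) (B c r : ℝ)
    (ha : 1 < ‖T x‖) (hb : 1 < ‖T y‖)
    (hB : ‖T y‖ ≤ B)
    (hc : 0 < c) (hr : 0 < r)
    (ht : c/3 * r ≤ ‖T x - T y‖) :
    |green T x y| ≤ (2*Real.pi)⁻¹ *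
      (Real.log B + Real.log (1+B) + 2*Real.sqrt (3/c) * (Real.sqrt r)⁻¹) := by
  set a := T x
  set b := T y
  set t := ‖a - b‖ with htdef
  set d := ‖a - starInv b‖ * ‖b‖ with hddef
  have hB1 : 1 ≤ B := le_trans hb.le hB
  have hb0 : b ≠ 0 := by
    intro h; rw [h] at hb; simp at hb; linarith
  have ht0 : 0 < t := lt_of_lt_of_le (by positivity) ht
  have hkey := key_identity a b hb0
  rw [← hddef, ← htdef] at hkey
  have hA2 : 1 < ‖a‖^2 := by nlinarith
  have hB2 : 1 < ‖b‖^2 := by nlinarith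
  have hd2 : t^2 < d^2 := by
    rw [hkey]
    nlinarith
  have hd0 : 0 < d := by
    have : 0 ≤ d := mul_nonneg (norm_nonneg _) (norm_nonneg _)
    nlinarith
  have htd : t < d := by nlinarith
  -- upper bound for d
  have hbstar : ‖b - starInv b‖ ≤ B := by
    have : b - starInv b = (1 - (‖b‖ ^ 2)⁻¹) • b := by
      unfold starInv
      rw [sub_smul, one_smul]
    have hk0 : 0 < (‖b‖ ^ 2)⁻¹ := by positivity
    have hk1 : (‖b‖ ^ 2)⁻¹ < 1 := by
      rw [inv_lt_one_iff₀]
      right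
      nlinarith
    calc ‖b - starInv b‖
        = |1 - (‖b‖^2)⁻¹| * ‖b‖ := by
          rw [this, norm_smul, Real.norm_eq_abs]
    _ ≤ 1 * B := by
          apply mul_le_mul _ hB (norm_nonneg b) zero_le_one
          rw [abs_of_nonneg (by linarith)]
          linarith
    _ = B := one_mul B
  have hdub : d ≤ B * (t + B) := by
    have h1 : ‖a - starInv b‖ ≤ t + B := by
      calc ‖a - starInv b‖ ≤ ‖a - b‖ + ‖b - starInv b‖ := by
            simpa using norm_sub_le_norm_sub_add_norm_sub (a) (b) (starInv b)
      _ ≤ t + B := by rw [htdef]; linarith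
    calc d ≤ ‖b‖ * (t + B) := by
          rw [hddef, mul_comm]
          exact mul_le_mul_of_nonneg_left h1 (norm_nonneg b)
    _ ≤ B * (t + B) := mul_le_mul_of_nonneg_right hB (by linarith)
  -- the log estimate
  have hgr : green T x y = (2*Real.pi)⁻¹ * Real.log (t / d) := rfl
  have hratio : t / d < 1 := (div_lt_one hd0).2 htd
  have hratio0 : 0 < t / d := div_pos ht0 hd0
  have hlogneg : Real.log (t/d) ≤ 0 := Real.log_nonpos hratio0.le hratio.le
  have habs : |green T x y| = (2*Real.pi)⁻¹ * (Real.log d - Real.log t) := by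
    rw [hgr, abs_mul, abs_of_nonneg (by positivity : (0:ℝ) ≤ (2*Real.pi)⁻¹),
      abs_of_nonpos hlogneg, Real.log_div ht0.ne' hd0.ne']
    ring
  rw [habs]
  apply mul_le_mul_of_nonneg_left _ (by positivity : (0:ℝ) ≤ (2*Real.pi)⁻¹)
  -- main case split
  have hsqrt_eq : 2*Real.sqrt (3/c) * (Real.sqrt r)⁻¹ = 2*Real.sqrt (3/(c*r)) := by
    rw [mul_assoc, ← Real.sqrt_inv, ← Real.sqrt_mul (by positivity : (0:ℝ) ≤ 3/c)]
    have hre : (3/c)*r⁻¹ = 3/(c*r) := by field_simp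
    rw [hre]
  have hsqrtnn : 0 ≤ 2*Real.sqrt (3/c) * (Real.sqrt r)⁻¹ := by positivity
  have hlogd : Real.log d ≤ Real.log B + Real.log (t + B) := by
    calc Real.log d ≤ Real.log (B * (t + B)) := Real.log_le_log hd0 hdub
    _ = Real.log B + Real.log (t + B) := Real.log_mul (by linarith) (by linarith)
  by_cases hcase : 1 ≤ t
  · have h2 : Real.log (t + B) ≤ Real.log t + Real.log (1 + B) := by
      rw [← Real.log_mul (by linarith) (by linarith)]
      apply Real.log_le_log (by linarith)
      nlinarith
    linarith
  · push_neg at hcase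
    have h2 : Real.log (t + B) ≤ Real.log (1 + B) := by
      apply Real.log_le_log (by linarith)
      linarith
    have h3 : -Real.log t ≤ 2*Real.sqrt (3/c) * (Real.sqrt r)⁻¹ := by
      rw [hsqrt_eq]
      have h4 : Real.log (c/3 * r) ≤ Real.log t := Real.log_le_log (by positivity) ht
      have h5 : -Real.log t ≤ -Real.log (c/3*r) := by linarith
      have h6 : -Real.log (c/3*r) = Real.log (3/(c*r)) := by
        rw [← Real.log_inv]
        congr 1
        field_simp
      rw [h6] at h5
      exact h5.trans (log_le_two_sqrt (by positivity))
    linarith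

lemma wfun_eq {t : ℝ} (ht : t ≠ 0) :
    t ^ (-(1/2) : ℝ) + (-t) ^ (-(1/2) : ℝ) = (Real.sqrt |t|)⁻¹ := by
  have hcos : Real.cos ((-(1/2)) * Real.pi) = 0 := by
    rw [neg_mul, Real.cos_neg, show (1/2:ℝ)*Real.pi = Real.pi/2 by ring, Real.cos_pi_div_two]
  rcases lt_or_gt_of_ne ht with hneg | hpos
  · rw [Real.rpow_def_of_neg hneg, hcos, mul_zero, zero_add,
      Real.rpow_neg (by linarith), Real.sqrt_eq_rpow, abs_of_neg hneg]
  · have hneg' : -t < 0 := by linarith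
    rw [Real.rpow_def_of_neg hneg', hcos, mul_zero, add_zero,
      Real.rpow_neg hpos.le, Real.sqrt_eq_rpow, abs_of_pos hpos]

lemma null_re_zero : (volume : Measure ℂ) {z : ℂ | z.re = 0} = 0 := by
  have hset : {z : ℂ | z.re = 0}
      = Complex.measurableEquivRealProd ⁻¹' (({0} : Set ℝ) ×ˢ (univ : Set ℝ)) := by
    ext z
    simp [Complex.measurableEquivRealProd_apply, eq_comm]
  rw [hset, Complex.volume_preserving_equiv_real_prod.measure_preimage
    ((MeasurableSet.singleton 0).prod MeasurableSet.univ).nullMeasurableSet]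
  rw [MeasureTheory.Measure.volume_eq_prod, Measure.prod_prod]
  simp

lemma integrableOn_inv_sqrt_norm (R : ℝ) :
    IntegrableOn (fun y : ℂ => (Real.sqrt ‖y‖)⁻¹) (Metric.closedBall 0 R) volume := by
  by_cases hR : 0 ≤ R
  swap
  · push_neg at hR
    rw [Metric.closedBall_eq_empty.2 hR]
    exact integrableOn_empty
  -- 1-d integrability
  have h1 : IntervalIntegrable (fun x : ℝ => x ^ (-(1/2):ℝ)) volume (-R-1) (R+1) :=
    intervalIntegral.intervalIntegrable_rpow' (by norm_num)
  have h2 : IntervalIntegrable (fun x : ℝ => (-x) ^ (-(1/2):ℝ)) volume (-R-1) (R+1) := by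
    have h2' : IntervalIntegrable (fun x : ℝ => x ^ (-(1/2):ℝ)) volume (-(-R-1)) (-(R+1)) :=
      intervalIntegral.intervalIntegrable_rpow' (by norm_num)
    have := (IntervalIntegrable.iff_comp_neg (by simp)).1 h2'
    simpa [sub_eq_add_neg] using this
  have hsum : IntegrableOn (fun t : ℝ => t ^ (-(1/2):ℝ) + (-t) ^ (-(1/2):ℝ))
      (Set.Ioc (-R-1) (R+1)) volume := by
    have := (h1.add h2)
    rw [intervalIntegrable_iff] at this
    rwa [Set.uIoc_of_le (by linarith)] at this
  set w : ℝ → ℝ := fun t => t ^ (-(1/2):ℝ) + (-t) ^ (-(1/2):ℝ) with hw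
  set g1 : ℝ → ℝ := (Set.Ioc (-R-1) (R+1)).indicator w with hg1
  set g2 : ℝ → ℝ := (Set.Ioc (-R-1) (R+1)).indicator 1 with hg2
  have hg1i : Integrable g1 volume := by
    rw [hg1, integrable_indicator_iff measurableSet_Ioc]
    exact hsum
  have hg2i : Integrable g2 volume := by
    rw [hg2, integrable_indicator_iff measurableSet_Ioc]
    exact integrableOn_const measure_Ioc_lt_top.ne
  have hG : Integrable (fun p : ℝ × ℝ => g1 p.1 * g2 p.2) (volume.prod volume) :=
    hg1i.mul_prod hg2i
  have hGc : Integrable (fun z : ℂ => g1 z.re * g2 z.im) volume := by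
    have hiff := Complex.volume_preserving_equiv_real_prod.integrable_comp_emb
      Complex.measurableEquivRealProd.measurableEmbedding
      (g := fun p : ℝ × ℝ => g1 p.1 * g2 p.2)
    exact hiff.2 hG
  apply Integrable.mono (hGc.restrict (s := Metric.closedBall 0 R))
  · exact ((Real.continuous_sqrt.comp continuous_norm).measurable.inv).aestronglyMeasurable
  · have hae : ∀ᵐ z : ℂ ∂(volume.restrict (Metric.closedBall 0 R)), z.re ≠ 0 := by
      apply ae_restrict_of_ae
      rw [ae_iff]
      simpa using null_re_zero
    have haeball : ∀ᵐ z : ℂ ∂(volume.restrict (Metric.closedBall 0 R)),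
        z ∈ Metric.closedBall 0 R :=
      ae_restrict_mem measurableSet_closedBall
    filter_upwards [hae, haeball] with z hz hball
    have hzn : |z.re| ≤ ‖z‖ := Complex.abs_re_le_norm z
    have hzR : ‖z‖ ≤ R := by simpa [Metric.mem_closedBall, dist_zero_right] using hball
    have hre : |z.re| ≤ R := hzn.trans hzR
    have hg2v : g2 z.im = 1 := by
      rw [hg2, Set.indicator_of_mem]
      · rfl
      · have := abs_le.1 ((Complex.abs_im_le_norm z).trans hzR)
        constructor
        · linarith [this.1]
        · linarith [this.2]
    have hg1v : g1 z.re = (Real.sqrt |z.re|)⁻¹ := by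
      rw [hg1, Set.indicator_of_mem]
      · exact wfun_eq hz
      · rcases abs_le.1 hre with ⟨h1', h2'⟩
        exact ⟨by linarith, by linarith⟩
    rw [Real.norm_eq_abs, Real.norm_eq_abs, hg1v, hg2v, mul_one]
    have hpos : 0 < Real.sqrt |z.re| := Real.sqrt_pos.2 (abs_pos.2 hz)
    rw [abs_of_nonneg (by positivity), abs_of_nonneg (by positivity)]
    apply inv_anti₀ hpos
    exact Real.sqrt_le_sqrt hzn

/-- An injective holomorphic function on an open set has nonvanishing derivative. -/
lemma inj_deriv_ne_zero {f : ℂ → ℂ} {s : Set ℂ} (hs : IsOpen s)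
    (hf : DifferentiableOn ℂ f s) (hinj : Set.InjOn f s) {z₀ : ℂ} (hz : z₀ ∈ s) :
    deriv f z₀ ≠ 0 := by
  intro hd0
  have hAn : AnalyticOnNhd ℂ f s := hf.analyticOnNhd hs
  have hfa : AnalyticAt ℂ f z₀ := hAn z₀ hz
  set F : ℂ → ℂ := fun z => f z - f z₀ with hF
  have hFa : AnalyticAt ℂ F z₀ := hfa.sub analyticAt_const
  -- helper: no neighborhood on which f is constantly f z₀
  have hnc : ¬ (∀ᶠ z in nhds z₀, f z = f z₀) := by
    intro hev
    obtain ⟨ε, hε, hball⟩ := Metric.mem_nhds_iff.1 (Filter.inter_mem hev (hs.mem_nhds hz))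
    have hz₁ : z₀ + ε/2 ∈ Metric.ball z₀ ε := by
      simp [Metric.mem_ball, dist_eq_norm]
      rw [abs_of_pos (by linarith)]; linarith
    obtain ⟨hfz₁, hz₁s⟩ := hball hz₁
    have : z₀ + ε/2 = z₀ := hinj hz₁s hz hfz₁
    simp at this; linarith
  -- the order of F at z₀ is a finite natural number n
  have horder : analyticOrderAt F z₀ ≠ ⊤ := by
    intro htop
    have hev := analyticOrderAt_eq_top.1 htop
    exact hnc (hev.mono (fun z hz => by simpa [hF, sub_eq_zero] using hz))
  obtain ⟨n, hn⟩ := WithTop.ne_top_iff_exists.1 horder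
  obtain ⟨g, hg, hg0, hfac⟩ := (hFa.analyticOrderAt_eq_natCast).1 hn.symm
  -- n ≠ 0
  have hn0 : n ≠ 0 := by
    intro h
    have := hfac.self_of_nhds
    simp [h, hF] at this
    exact hg0 this.symm
  -- n ≠ 1
  have hn1 : n ≠ 1 := by
    intro h
    have hd : deriv F z₀ = 0 := by
      simp [hF, deriv_sub_const, hd0]
    have hder : HasDerivAt (fun z => (z - z₀) ^ n • g z) (g z₀) z₀ := by
      subst h
      have hgd : HasDerivAt g (deriv g z₀) z₀ := hg.differentiableAt.hasDerivAt
      have := (((hasDerivAt_id z₀).sub_const z₀).mul hgd)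
      simp only [pow_one, smul_eq_mul]
      exact this.congr_deriv (by simp)
    have hEq : F =ᶠ[nhds z₀] fun z => (z - z₀) ^ n • g z := hfac
    rw [hEq.deriv_eq] at hd
    rw [hder.deriv] at hd
    exact hg0 hd
  have hn2 : 2 ≤ n := by omega
  -- construct the n-th root φ of F near z₀
  set ψ : ℂ → ℂ := fun z => Complex.exp ((Complex.log (g z₀) + Complex.log (g z / g z₀)) / n) with hψ
  have hdiv : AnalyticAt ℂ (fun z => g z / g z₀) z₀ := hg.div analyticAt_const hg0
  have hψa : AnalyticAt ℂ ψ z₀ := by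
    apply AnalyticAt.cexp
    apply AnalyticAt.div
    · apply AnalyticAt.add analyticAt_const
      apply (analyticAt_clog _).comp hdiv
      simp only [div_self hg0]
      exact Complex.one_mem_slitPlane
    · exact analyticAt_const
    · exact_mod_cast Nat.cast_ne_zero.2 hn0
  have hψ0 : ψ z₀ ≠ 0 := Complex.exp_ne_zero _
  set φ : ℂ → ℂ := fun z => (z - z₀) * ψ z with hφ
  have hφa : AnalyticAt ℂ φ z₀ := ((analyticAt_id.sub analyticAt_const).mul hψa)
  have hφ0 : φ z₀ = 0 := by simp [hφ]
  -- eventually, F z = (φ z) ^ n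
  have hgev : ∀ᶠ z in nhds z₀, g z ≠ 0 := hg.continuousAt.eventually_ne hg0
  have hroot : ∀ᶠ z in nhds z₀, F z = (φ z) ^ n := by
    filter_upwards [hfac, hgev] with z h1 h2
    have hψn : (ψ z) ^ n = g z := by
      rw [hψ]
      rw [← Complex.exp_nat_mul]
      rw [mul_div_cancel₀ _ (by exact_mod_cast Nat.cast_ne_zero.2 hn0 : (n:ℂ) ≠ 0)]
      rw [Complex.exp_add, Complex.exp_log hg0, Complex.exp_log (div_ne_zero h2 hg0)]
      field_simp
    rw [h1, hφ]
    rw [mul_pow, hψn, smul_eq_mul]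
  -- the set where everything holds is a neighborhood
  have hV : {z | F z = (φ z) ^ n} ∩ s ∈ nhds z₀ :=
    Filter.inter_mem hroot (hs.mem_nhds hz)
  -- open mapping for φ
  rcases hφa.eventually_constant_or_nhds_le_map_nhds with hconst | hmap
  · -- φ eventually 0 ⟹ f eventually constant: contradiction
    apply hnc
    filter_upwards [hconst, hroot] with z h1 h2
    have : F z = 0 := by rw [h2, h1, hφ0]; exact zero_pow hn0
    simpa [hF, sub_eq_zero] using this
  · rw [hφ0] at hmap
    have hW : φ '' ({z | F z = (φ z) ^ n} ∩ s) ∈ nhds (0:ℂ) := by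
      apply hmap
      exact Filter.image_mem_map hV
    obtain ⟨ε, hε, hball⟩ := Metric.mem_nhds_iff.1 hW
    -- the two roots of unity trick
    set u : ℂ := Complex.exp ((2 * Real.pi / n : ℝ) * Complex.I) with hu
    have huabs : ‖u‖ = 1 := Complex.norm_exp_ofReal_mul_I _
    have hun : u ^ n = 1 := by
      rw [hu, ← Complex.exp_nat_mul]
      have hne : (n:ℂ) ≠ 0 := by exact_mod_cast Nat.cast_ne_zero.2 hn0
      have : (n:ℂ) * ((2 * Real.pi / n : ℝ) * Complex.I) = 2 * Real.pi * Complex.I := by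
        push_cast
        field_simp
      rw [this, Complex.exp_two_pi_mul_I]
    have hu1 : u ≠ 1 := by
      rw [hu]
      intro hc
      rw [Complex.exp_eq_one_iff] at hc
      obtain ⟨k, hk⟩ := hc
      have him : (2 * Real.pi / n : ℝ) = k * (2 * Real.pi) := by
        have := congrArg Complex.im hk
        simpa using this
      have hπ := Real.pi_pos
      have hkpos : (0:ℝ) < k := by
        by_contra hkn
        push_neg at hkn
        have : (k:ℝ) * (2 * Real.pi) ≤ 0 := mul_nonpos_of_nonpos_of_nonneg (by exact_mod_cast hkn) (by positivity)
        have hpos : (0:ℝ) < 2 * Real.pi / n := by positivity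
        linarith
      have hk1 : (1:ℝ) ≤ k := by exact_mod_cast Int.cast_one_le_of_pos (by exact_mod_cast hkpos)
      have hnn : (2:ℝ) ≤ n := by exact_mod_cast hn2
      have : 2 * Real.pi / n < 2 * Real.pi := by
        rw [div_lt_iff₀ (by linarith)]
        nlinarith
      nlinarith
    set ζ : ℂ := ((ε/2 : ℝ) : ℂ) with hζ
    have hζ0 : ζ ≠ 0 := by
      simp only [hζ, ne_eq, Complex.ofReal_eq_zero]
      positivity
    have hζmem : ζ ∈ Metric.ball (0:ℂ) ε := by
      simp only [hζ, Metric.mem_ball, dist_zero_right, Complex.norm_real, Real.norm_eq_abs,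
        abs_of_pos (half_pos hε)]
      linarith
    have hζ'mem : u * ζ ∈ Metric.ball (0:ℂ) ε := by
      simp only [Metric.mem_ball, dist_zero_right, norm_mul, huabs, one_mul]
      simpa [Metric.mem_ball] using hζmem
    obtain ⟨z₁, ⟨hz₁F, hz₁s⟩, hφz₁⟩ := hball hζmem
    obtain ⟨z₂, ⟨hz₂F, hz₂s⟩, hφz₂⟩ := hball hζ'mem
    have hfz : f z₁ = f z₂ := by
      have h1 : F z₁ = ζ ^ n := by rw [hz₁F, hφz₁]
      have h2 : F z₂ = ζ ^ n := by rw [hz₂F, hφz₂, mul_pow, hun, one_mul]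
      have := h1.trans h2.symm
      simpa [hF, sub_left_inj] using this
    have hzz : z₁ = z₂ := hinj hz₁s hz₂s hfz
    rw [hzz, hφz₂] at hφz₁
    have hmul : (u - 1) * ζ = 0 := by linear_combination hφz₁
    rcases mul_eq_zero.1 hmul with h | h
    · exact hu1 (by linear_combination h)
    · exact hζ0 h

/-- An injective holomorphic map is uniformly bi-Lipschitz from below on compacts. -/
lemma bilip_of_inj {T : ℂ → ℂ} {U K : Set ℂ} (hUo : IsOpen U) (hT : DifferentiableOn ℂ T U)
    (hinj : Set.InjOn T U) (hK : IsCompact K) (hKU : K ⊆ U) (hKne : K.Nonempty) :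
    ∃ c > (0:ℝ), ∀ y₁ ∈ K, ∀ y₂ ∈ K, c * dist y₁ y₂ ≤ dist (T y₁) (T y₂) := by
  obtain ⟨δ₀, hδ₀, hthick⟩ := hK.exists_thickening_subset_open hUo hKU
  set K2 : Set ℂ := Metric.cthickening (δ₀/2) K with hK2
  have hK2U : K2 ⊆ U :=
    (Metric.cthickening_subset_thickening' hδ₀ (half_lt_self hδ₀) K).trans hthick
  have hK2c : IsCompact K2 := hK.cthickening
  have hKK2 : K ⊆ K2 := Metric.self_subset_cthickening _
  have hanT : AnalyticOnNhd ℂ T U := hT.analyticOnNhd hUo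
  have hd : ContinuousOn (deriv T) U := hanT.deriv.continuousOn
  have habs : ContinuousOn (fun z => ‖deriv T z‖) K2 :=
    continuous_norm.comp_continuousOn (hd.mono hK2U)
  obtain ⟨zm, hzm, hmin⟩ := hK2c.exists_isMinOn (hKne.mono hKK2) habs
  set c₀ : ℝ := ‖deriv T zm‖ with hc₀def
  have hc₀ : 0 < c₀ := norm_pos_iff.2 (inj_deriv_ne_zero hUo hT hinj (hK2U hzm))
  -- uniform continuity of deriv T on K2
  have huc := hK2c.uniformContinuousOn_of_continuous (hd.mono hK2U)
  obtain ⟨δ₁, hδ₁, hucd⟩ := Metric.uniformContinuousOn_iff.1 huc (c₀/2) (half_pos hc₀)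
  set δ₂ : ℝ := min (δ₀/2) (δ₁/2) with hδ₂def
  have hδ₂ : 0 < δ₂ := lt_min (half_pos hδ₀) (half_pos hδ₁)
  -- near pairs
  have hnear : ∀ y₁ ∈ K, ∀ y₂ ∈ K, dist y₁ y₂ ≤ δ₂ →
      (c₀/2) * dist y₁ y₂ ≤ dist (T y₁) (T y₂) := by
    intro y₁ hy₁ y₂ hy₂ hdd
    set s' : Set ℂ := Metric.closedBall y₁ (dist y₁ y₂) with hs'
    have hs'K2 : s' ⊆ K2 := by
      intro z hz
      exact Metric.mem_cthickening_of_dist_le z y₁ _ _ hy₁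
        ((Metric.mem_closedBall.1 hz).trans (hdd.trans (min_le_left _ _)))
    set G : ℂ → ℂ := fun z => T z - deriv T y₁ * z with hG
    have hFD : ∀ z ∈ s', HasFDerivWithinAt G
        (((ContinuousLinearMap.smulRight (1:ℂ→L[ℂ]ℂ) (deriv T z - deriv T y₁))).restrictScalars ℝ) s' z := by
      intro z hz
      have hTz : HasDerivAt T (deriv T z) z :=
        (hT.differentiableAt (hUo.mem_nhds (hK2U (hs'K2 hz)))).hasDerivAt
      have hGz : HasDerivAt G (deriv T z - deriv T y₁) z := by
        exact (hTz.sub ((hasDerivAt_id z).const_mul (deriv T y₁))).congr_deriv (by simp)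
      exact ((hGz.hasFDerivAt).restrictScalars ℝ).hasFDerivWithinAt
    have hbound : ∀ z ∈ s',
        ‖((ContinuousLinearMap.smulRight (1:ℂ→L[ℂ]ℂ) (deriv T z - deriv T y₁))).restrictScalars ℝ‖
          ≤ c₀/2 := by
      intro z hz
      rw [ContinuousLinearMap.norm_restrictScalars, ContinuousLinearMap.norm_smulRight_apply]
      simp only [ContinuousLinearMap.one_def, ContinuousLinearMap.norm_id, one_mul]
      have hdist : dist z y₁ < δ₁ := by
        calc dist z y₁ ≤ dist y₁ y₂ := Metric.mem_closedBall.1 hz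
        _ ≤ δ₂ := hdd
        _ ≤ δ₁/2 := min_le_right _ _
        _ < δ₁ := half_lt_self hδ₁
      have := hucd z (hs'K2 hz) y₁ (hKK2 hy₁) hdist
      rw [dist_eq_norm] at this
      exact this.le
    have hy₂s' : y₂ ∈ s' := by simp [hs', Metric.mem_closedBall, dist_comm]
    have hy₁s' : y₁ ∈ s' := Metric.mem_closedBall_self dist_nonneg
    have hmvt := (convex_closedBall y₁ (dist y₁ y₂)).norm_image_sub_le_of_norm_hasFDerivWithin_le
      hFD hbound hy₁s' hy₂s'
    -- ‖G y₂ - G y₁‖ ≤ c₀/2 * ‖y₂ - y₁‖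
    have hker : T y₂ - T y₁ = (G y₂ - G y₁) + deriv T y₁ * (y₂ - y₁) := by
      simp only [hG]; ring
    have hlow : c₀ * ‖y₂ - y₁‖ ≤ ‖deriv T y₁ * (y₂ - y₁)‖ := by
      rw [norm_mul]
      have : c₀ ≤ ‖deriv T y₁‖ := hmin (hKK2 hy₁)
      exact mul_le_mul_of_nonneg_right this (norm_nonneg _)
    have htri : ‖deriv T y₁ * (y₂ - y₁)‖ - ‖G y₂ - G y₁‖ ≤ ‖T y₂ - T y₁‖ := by
      rw [hker]
      have heq : deriv T y₁ * (y₂ - y₁)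
          = (G y₂ - G y₁ + deriv T y₁ * (y₂ - y₁)) - (G y₂ - G y₁) := by ring
      have h3 : ‖deriv T y₁ * (y₂ - y₁)‖
          ≤ ‖G y₂ - G y₁ + deriv T y₁ * (y₂ - y₁)‖ + ‖G y₂ - G y₁‖ := by
        calc ‖deriv T y₁ * (y₂ - y₁)‖
            = ‖(G y₂ - G y₁ + deriv T y₁ * (y₂ - y₁)) - (G y₂ - G y₁)‖ := by
              rw [add_sub_cancel_left]
        _ ≤ _ := norm_sub_le _ _
      linarith
    rw [dist_eq_norm, dist_eq_norm]
    have h1 : ‖y₂ - y₁‖ = ‖y₁ - y₂‖ := norm_sub_rev _ _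
    have h2 : ‖T y₂ - T y₁‖ = ‖T y₁ - T y₂‖ := norm_sub_rev _ _
    rw [← h1, ← h2]
    linarith
  -- far pairs
  set S : Set (ℂ × ℂ) := (K ×ˢ K) ∩ {p : ℂ × ℂ | δ₂ ≤ dist p.1 p.2} with hS
  by_cases hSne : S.Nonempty
  · have hSc : IsCompact S := (hK.prod hK).inter_right
      (isClosed_le continuous_const (continuous_fst.dist continuous_snd))
    have hTc : ContinuousOn T U := hT.continuousOn
    have hF1 : ContinuousOn (fun p : ℂ × ℂ => T p.1) S :=
      hTc.comp continuous_fst.continuousOn (fun p hp => hKU hp.1.1)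
    have hF2 : ContinuousOn (fun p : ℂ × ℂ => T p.2) S :=
      hTc.comp continuous_snd.continuousOn (fun p hp => hKU hp.1.2)
    have hF : ContinuousOn (fun p : ℂ × ℂ => dist (T p.1) (T p.2)) S :=
      continuous_dist.comp_continuousOn (f := fun p : ℂ × ℂ => (T p.1, T p.2)) (hF1.prodMk hF2)
    obtain ⟨pm, hpm, hminF⟩ := hSc.exists_isMinOn hSne hF
    have hminF' : ∀ p ∈ S, dist (T pm.1) (T pm.2) ≤ dist (T p.1) (T p.2) :=
      fun p hp => hminF hp
    obtain ⟨m, hm0, hmle, hge'⟩ : ∃ m : ℝ, 0 < m ∧ m ≤ dist (T pm.1) (T pm.2) ∧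
        ∀ p ∈ S, m ≤ dist (T p.1) (T p.2) := by
      refine ⟨dist (T pm.1) (T pm.2), ?_, le_refl _, hminF'⟩
      rw [dist_pos]
      intro heq
      have hne : pm.1 = pm.2 := hinj (hKU hpm.1.1) (hKU hpm.1.2) heq
      have h2 : δ₂ ≤ dist pm.1 pm.2 := hpm.2
      rw [hne, dist_self] at h2
      linarith
    obtain ⟨R, hR⟩ := Metric.isBounded_iff.1 hK.isBounded
    have hR0 : 0 ≤ R := le_trans dist_nonneg (hR hKne.some_mem hKne.some_mem)
    refine ⟨min (c₀/2) (m/(R+1)), lt_min (half_pos hc₀) (by positivity), ?_⟩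
    intro y₁ hy₁ y₂ hy₂
    by_cases hcase : dist y₁ y₂ ≤ δ₂
    · calc min (c₀/2) (m/(R+1)) * dist y₁ y₂ ≤ (c₀/2) * dist y₁ y₂ :=
        mul_le_mul_of_nonneg_right (min_le_left _ _) dist_nonneg
      _ ≤ dist (T y₁) (T y₂) := hnear y₁ hy₁ y₂ hy₂ hcase
    · push_neg at hcase
      have hmem : (y₁, y₂) ∈ S := ⟨⟨hy₁, hy₂⟩, hcase.le⟩
      have hge : m ≤ dist (T y₁) (T y₂) := hge' (y₁, y₂) hmem
      calc min (c₀/2) (m/(R+1)) * dist y₁ y₂ ≤ (m/(R+1)) * dist y₁ y₂ :=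
        mul_le_mul_of_nonneg_right (min_le_right _ _) dist_nonneg
      _ ≤ (m/(R+1)) * (R+1) :=
          mul_le_mul_of_nonneg_left ((hR hy₁ hy₂).trans (by linarith))
            (div_nonneg hm0.le (by linarith))
      _ = m := div_mul_cancel₀ m (by linarith)
      _ ≤ dist (T y₁) (T y₂) := hge
  · refine ⟨c₀/2, half_pos hc₀, ?_⟩
    intro y₁ hy₁ y₂ hy₂
    apply hnear y₁ hy₁ y₂ hy₂
    by_contra hlt
    push_neg at hlt
    exact hSne ⟨(y₁, y₂), ⟨⟨hy₁, hy₂⟩, hlt.le⟩⟩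

/-- The stream function `ψ(x) = ∫_U G(x,y) ω(y) dy` of a compactly supported smooth
vorticity is bounded on `U`. -/
theorem stmt2
    (Ω : Set ℂ) (hΩo : IsOpen Ω) (hΩb : Bornology.IsBounded Ω)
    (U : Set ℂ) (hU : U = (closure Ω)ᶜ)
    (T Tinv h : ℂ → ℂ) (β M₁ : ℝ) (hβ : 0 < β) (hM₁ : 0 < M₁)
    (hTholo : DifferentiableOn ℂ T U)
    (hTbij : Set.BijOn T U {z : ℂ | 1 < ‖z‖})
    (hTform : ∀ z ∈ U, T z = (β : ℂ) * z + h z)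
    (hhholo : DifferentiableOn ℂ h U)
    (hhbdd : ∃ C : ℝ, ∀ z ∈ U, ‖h z‖ ≤ C)
    (hh1 : ∀ z ∈ U, ‖deriv h z‖ ≤ M₁ / ‖z‖ ^ 2)
    (hh2 : ∀ z ∈ U, ‖deriv (deriv h) z‖ ≤ M₁ / ‖z‖ ^ 3)
    (hDT : ∀ z ∈ U, ‖fderiv ℝ T z‖ ≤ M₁)
    (hTinv : Set.InvOn Tinv T U {z : ℂ | 1 < ‖z‖})
    (hDTinv : ∀ w : ℂ, 1 < ‖w‖ → ‖fderiv ℝ Tinv w‖ ≤ M₁)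
    (ω : ℂ → ℝ) (hωsm : ContDiff ℝ (⊤ : ℕ∞) ω) (hωcs : HasCompactSupport ω)
    (hωsupp : tsupport ω ⊆ U) :
    ∃ C > (0:ℝ), ∀ x ∈ U, |∫ y in U, green T x y * ω y| ≤ C := by
  by_cases hKe : (tsupport ω).Nonempty
  swap
  · refine ⟨1, one_pos, ?_⟩
    intro x hx
    have hz : ∀ y, ω y = 0 := fun y =>
      image_eq_zero_of_notMem_tsupport (fun hy => hKe ⟨y, hy⟩)
    simp [hz]
  · have hUo : IsOpen U := by rw [hU]; exact isClosed_closure.isOpen_compl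
    set K := tsupport ω with hKdef
    have hKc : IsCompact K := hωcs
    have hKU : K ⊆ U := hωsupp
    have hinj : Set.InjOn T U := hTbij.injOn
    obtain ⟨c, hc, hbil⟩ := bilip_of_inj hUo hTholo hinj hKc hKU hKe
    obtain ⟨Mω, hMω⟩ := hωcs.exists_bound_of_continuous hωsm.continuous
    have hMω0 : 0 ≤ Mω := le_trans (norm_nonneg _) (hMω 0)
    -- bound on |T y| over K
    have hTcK : ContinuousOn T K := hTholo.continuousOn.mono hKU
    have hTK : IsCompact (T '' K) := hKc.image_of_continuousOn hTcK
    obtain ⟨r₁, hr₁⟩ := hTK.isBounded.subset_closedBall 0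
    set B : ℝ := max r₁ 1 with hBdef
    have hB1 : 1 ≤ B := le_max_right _ _
    have hBK : ∀ y ∈ K, ‖T y‖ ≤ B := by
      intro y hy
      have := hr₁ (mem_image_of_mem T hy)
      rw [Metric.mem_closedBall, dist_zero_right] at this
      exact this.trans (le_max_left _ _)
    -- diameter bound for K
    obtain ⟨RK, hRK⟩ := Metric.isBounded_iff.1 hKc.isBounded
    have hRK0 : 0 ≤ RK := le_trans dist_nonneg (hRK hKe.some_mem hKe.some_mem)
    -- the constants
    set A₁ : ℝ := Mω * (2*Real.pi)⁻¹ * (Real.log B + Real.log (1+B)) with hA₁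
    set A₂ : ℝ := Mω * (2*Real.pi)⁻¹ * (2 * Real.sqrt (3/c)) with hA₂
    have hlogB : 0 ≤ Real.log B := Real.log_nonneg hB1
    have hlogB' : 0 ≤ Real.log (1+B) := Real.log_nonneg (by linarith)
    have hA₁0 : 0 ≤ A₁ := by positivity
    have hA₂0 : 0 ≤ A₂ := by positivity
    set F₀ : ℂ → ℝ :=
      (Metric.closedBall (0:ℂ) RK).indicator (fun z => A₁ + A₂ * (Real.sqrt ‖z‖)⁻¹) with hF₀
    have hF₀nn : ∀ z, 0 ≤ F₀ z := by
      intro z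
      apply Set.indicator_nonneg
      intro z' _
      positivity
    have hF₀int : Integrable F₀ volume := by
      rw [hF₀, integrable_indicator_iff measurableSet_closedBall]
      apply Integrable.add
      · exact integrableOn_const measure_closedBall_lt_top.ne
      · exact (integrableOn_inv_sqrt_norm RK).const_mul A₂
    have hInn : 0 ≤ ∫ z, F₀ z := integral_nonneg hF₀nn
    refine ⟨(∫ z, F₀ z) + 1, by linarith, ?_⟩
    intro x hx
    -- the minimizing point y₀
    have hφc : ContinuousOn (fun y => dist (T x) (T y)) K :=
      continuous_dist.comp_continuousOn (f := fun y => (T x, T y)) (continuousOn_const.prodMk hTcK)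
    obtain ⟨y₀, hy₀K, hy₀min⟩ := hKc.exists_isMinOn hKe hφc
    have hy₀min' : ∀ y ∈ K, dist (T x) (T y₀) ≤ dist (T x) (T y) :=
      fun y hy => hy₀min hy
    -- pointwise lower bound on |T x - T y|
    have hTx1 : 1 < ‖T x‖ := hTbij.mapsTo hx
    have hlow : ∀ y ∈ K, c/3 * ‖y - y₀‖ ≤ ‖T x - T y‖ := by
      intro y hy
      have h1 : c * dist y y₀ ≤ dist (T y) (T y₀) := hbil y hy y₀ hy₀K
      have h2 : dist (T y) (T y₀) ≤ dist (T y) (T x) + dist (T x) (T y₀) :=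
        dist_triangle _ _ _
      have h3 : dist (T x) (T y₀) ≤ dist (T x) (T y) := hy₀min' y hy
      have h4 : dist (T y) (T x) = dist (T x) (T y) := dist_comm _ _
      have h5 : c * dist y y₀ ≤ 2 * dist (T x) (T y) := by linarith
      have h6 : dist y y₀ = ‖y - y₀‖ := dist_eq_norm _ _
      have h7 : dist (T x) (T y) = ‖T x - T y‖ := Complex.dist_eq _ _
      rw [← h6, ← h7]
      nlinarith [dist_nonneg (x := y) (y := y₀)]
    -- the a.e. pointwise bound
    have haebound : ∀ᵐ y ∂(volume.restrict U),
        ‖green T x y * ω y‖ ≤ F₀ (y - y₀) := by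
      have hy0null : ∀ᵐ (y : ℂ) ∂(volume.restrict U), y ≠ y₀ := by
        apply ae_restrict_of_ae
        rw [ae_iff]
        have : {y : ℂ | ¬ y ≠ y₀} = {y₀} := by ext z; simp
        rw [this]
        exact measure_singleton _
      filter_upwards [hy0null] with y hy
      by_cases hyK : y ∈ K
      · have hyy₀ : (0:ℝ) < ‖y - y₀‖ := by
          rw [norm_pos_iff, sub_ne_zero]; exact hy
        have hgb := green_bound T x y B c ‖y - y₀‖ hTx1
          (hTbij.mapsTo (hKU hyK)) (hBK y hyK) hc hyy₀ (hlow y hyK)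
        have hmem : y - y₀ ∈ Metric.closedBall (0:ℂ) RK := by
          rw [Metric.mem_closedBall, dist_zero_right, ← dist_eq_norm]
          exact hRK hyK hy₀K
        rw [hF₀, Set.indicator_of_mem hmem]
        have hbnd0 : (0:ℝ) ≤ (2*Real.pi)⁻¹ *
            (Real.log B + Real.log (1+B) + 2*Real.sqrt (3/c) * (Real.sqrt ‖y - y₀‖)⁻¹) := by
          positivity
        calc ‖green T x y * ω y‖ = |green T x y| * ‖ω y‖ := by
              rw [norm_mul, Real.norm_eq_abs]
        _ ≤ ((2*Real.pi)⁻¹ * (Real.log B + Real.log (1+B)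
              + 2*Real.sqrt (3/c) * (Real.sqrt ‖y - y₀‖)⁻¹)) * Mω :=
            mul_le_mul hgb (hMω y) (norm_nonneg _) hbnd0
        _ = A₁ + A₂ * (Real.sqrt ‖y - y₀‖)⁻¹ := by
            rw [hA₁, hA₂]; ring
      · have hzero : ω y = 0 := image_eq_zero_of_notMem_tsupport hyK
        rw [hzero, mul_zero, norm_zero]
        exact hF₀nn _
    -- assemble
    have hFti : Integrable (fun y => F₀ (y - y₀)) volume := hF₀int.comp_sub_right y₀
    have hFnn' : 0 ≤ᵐ[volume] (fun y => F₀ (y - y₀)) :=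
      Filter.Eventually.of_forall (fun y => hF₀nn _)
    calc |∫ y in U, green T x y * ω y| ≤ ∫ y in U, ‖green T x y * ω y‖ := by
          rw [← Real.norm_eq_abs]
          exact norm_integral_le_integral_norm _
    _ ≤ ∫ y in U, F₀ (y - y₀) := by
        apply integral_mono_of_nonneg
        · exact Filter.Eventually.of_forall (fun y => norm_nonneg _)
        · exact hFti.restrict
        · exact haebound
    _ ≤ ∫ y, F₀ (y - y₀) :=
        setIntegral_le_integral hFti (Filter.Eventually.of_forall (fun y => hF₀nn _))
    _ = ∫ y, F₀ y := integral_sub_right_eq_self F₀ y₀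
    _ ≤ (∫ z, F₀ z) + 1 := by linarith
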